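/- Let X be a proper geodesic metric space admitting a convex geodesic bicombing (as any maximal Gromov product space does). Fix o ∈ X and R > 0, let S = {x ∈ X : d(o,x) = R} be the sphere of radius R centered at o, and for a subset W ⊆ S let Cone_o(W) = {x ∈ X : some geodesic segment from o to x meets W}. If U and V are distinct connected components of S, then (p|q)_o ≤ R for all p ∈ Cone_o(U) and q ∈ Cone_o(V); in particular Cone_o(U) ∩ Cone_o(V) = ∅. Moreover, the set {x ∈ X : d(o,x) ≥ R} is the disjoint union of the sets Cone_o(U) as U ranges over the connected components of S. -/

import Mathlib

open Filter Topology Metric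
open scoped ENNReal

universe u v

/-- A semi-metric (separating function) on a compact metrizable space: continuous, symmetric,
nonnegative, and vanishing exactly on the diagonal. -/
def IsSemiMetric {Z : Type*} [TopologicalSpace Z] (ρ : Z → Z → ℝ) : Prop :=
  Continuous (Function.uncurry ρ) ∧ (∀ ξ η, ρ ξ η = ρ η ξ) ∧
    (∀ ξ η, 0 ≤ ρ ξ η) ∧ ∀ ξ η, ρ ξ η = 0 ↔ ξ = η

/-- An antipodal function: a semi-metric of diameter at most one such that every point has an
antipode at distance one. -/
def IsAntipodalFn {Z : Type*} [TopologicalSpace Z] (ρ : Z → Z → ℝ) : Prop :=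
  IsSemiMetric ρ ∧ (∀ ξ η, ρ ξ η ≤ 1) ∧ ∀ ξ, ∃ η, ρ ξ η = 1

/-- A geodesic segment from `x` to `y`, parametrized by arclength on `[0, dist x y]`. -/
def IsGeodesicSegment {X : Type*} [MetricSpace X] (γ : ℝ → X) (x y : X) : Prop :=
  γ 0 = x ∧ γ (dist x y) = y ∧
    ∀ s ∈ Set.Icc (0:ℝ) (dist x y), ∀ t ∈ Set.Icc (0:ℝ) (dist x y), dist (γ s) (γ t) = |s - t|

/-- A geodesic metric space: any two points are joined by a geodesic segment. -/
def IsGeodesicSpace (X : Type*) [MetricSpace X] : Prop :=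
  ∀ x y : X, ∃ γ : ℝ → X, IsGeodesicSegment γ x y

/-- Geodesic completeness: any geodesic segment extends to a bi-infinite geodesic. -/
def IsGeodesicallyComplete (X : Type*) [MetricSpace X] : Prop :=
  ∀ (x y : X) (γ : ℝ → X), IsGeodesicSegment γ x y →
    ∃ γ' : ℝ → X, (∀ s t : ℝ, dist (γ' s) (γ' t) = |s - t|) ∧
      ∀ s ∈ Set.Icc (0:ℝ) (dist x y), γ' s = γ s

/-- The Gromov product `(p|q)_o = (d(p,o) + d(q,o) − d(p,q))/2`. -/
noncomputable def gromovProd {X : Type*} [MetricSpace X] (o p q : X) : ℝ :=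
  (dist p o + dist q o - dist p q) / 2

/-- The cone over a subset `W` of the sphere of radius `R` about `o`: those points `x` such that
some geodesic segment from `o` to `x` meets `W`. -/
def coneAt {X : Type*} [MetricSpace X] (o : X) (W : Set X) : Set X :=
  {x | ∃ γ : ℝ → X, IsGeodesicSegment γ o x ∧ ∃ t ∈ Set.Icc (0:ℝ) (dist o x), γ t ∈ W}

/-- A geodesic bicombing: a choice, for each ordered pair `(x, y)`, of a constant-speed
parametrization on `[0,1]` of a geodesic from `x` to `y`. -/
def IsGeodesicBicombing {X : Type*} [MetricSpace X] (Γ : X → X → ℝ → X) : Prop :=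
  ∀ x y : X, Γ x y 0 = x ∧ Γ x y 1 = y ∧
    ∀ s t : ℝ, 0 ≤ s → s ≤ t → t ≤ 1 → dist (Γ x y s) (Γ x y t) = (t - s) * dist x y

/-- A convex geodesic bicombing: `t ↦ dist (Γ x y t) (Γ p q t)` is convex on `[0,1]`. -/
def IsConvexGeodesicBicombing {X : Type*} [MetricSpace X] (Γ : X → X → ℝ → X) : Prop :=
  IsGeodesicBicombing Γ ∧
    ∀ x y p q : X, ConvexOn ℝ (Set.Icc (0:ℝ) 1) (fun t => dist (Γ x y t) (Γ p q t))

/-!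
For a convex bicombing `Γ`, the radial projection `z ↦ Γ(o, z, R / d(o,z))` is a 2-Lipschitz
retraction of `{z | R ≤ d(o,z)}` onto the sphere `S` of radius `R` about `o`. If `(p|q)_o ≥ R`,
the bicombing geodesic from `p` to `q` stays outside the open ball of radius `R`, since
`(p|q)_o ≤ d(o, [p,q])`. Projecting it, together with the parts beyond `S` of geodesics `o → p`
and `o → q`, connects inside `S` the points where these geodesics cross `S`. So cones over
distinct components of `S` have Gromov product at most `R`, and are in particular disjoint
(`(x|x)_o = d(o,x) ≥ R`). Every `x` with `d(o,x) ≥ R` lies in the cone over the component of the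
point where a geodesic `o → x` crosses `S`.
-/

open Set

theorem connectedComponentIn_eq_of_continuousOn_Icc {Y : Type*} [TopologicalSpace Y]
    {F : Set Y} {f : ℝ → Y} {a b : ℝ} (hab : a ≤ b) (hf : ContinuousOn f (Icc a b))
    (hF : MapsTo f (Icc a b) F) : connectedComponentIn F (f a) = connectedComponentIn F (f b) :=
  connectedComponentIn_eq <| (isPreconnected_Icc.image f hf).subset_connectedComponentIn
    (mem_image_of_mem f (left_mem_Icc.2 hab)) hF.image_subset
    (mem_image_of_mem f (right_mem_Icc.2 hab))

variable {X : Type*} [MetricSpace X]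

theorem gromovProd_self (o x : X) : gromovProd o x x = dist x o := by
  simp only [gromovProd, dist_self, sub_zero, add_self_div_two]

namespace IsGeodesicSegment

variable {γ : ℝ → X} {x y : X}

theorem dist_left (h : IsGeodesicSegment γ x y) {t : ℝ} (ht : t ∈ Icc 0 (dist x y)) :
    dist x (γ t) = t := by
  have h0t := h.2.2 0 ⟨le_rfl, dist_nonneg⟩ t ht
  rwa [h.1, zero_sub, abs_neg, abs_of_nonneg ht.1] at h0t

theorem lipschitzOnWith (h : IsGeodesicSegment γ x y) :
    LipschitzOnWith 1 γ (Icc 0 (dist x y)) :=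
  LipschitzOnWith.of_dist_le_mul fun s hs t ht => by
    rw [h.2.2 s hs t ht, Real.dist_eq, NNReal.coe_one, one_mul]

end IsGeodesicSegment

namespace IsGeodesicBicombing

variable {Γ : X → X → ℝ → X} (hΓ : IsGeodesicBicombing Γ) {x y : X} {s t : ℝ}
include hΓ

theorem dist_apply_apply (hs : s ∈ Icc (0 : ℝ) 1) (ht : t ∈ Icc (0 : ℝ) 1) :
    dist (Γ x y s) (Γ x y t) = |s - t| * dist x y := by
  rcases le_total s t with hst | hts
  · rw [(hΓ x y).2.2 s t hs.1 hst ht.2, abs_sub_comm, abs_of_nonneg (sub_nonneg.2 hst)]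
  · rw [dist_comm, (hΓ x y).2.2 t s ht.1 hts hs.2, abs_of_nonneg (sub_nonneg.2 hts)]

theorem dist_left_apply (ht : t ∈ Icc (0 : ℝ) 1) : dist x (Γ x y t) = t * dist x y := by
  have h := hΓ.dist_apply_apply (x := x) (y := y) ⟨le_rfl, zero_le_one⟩ ht
  rwa [(hΓ x y).1, zero_sub, abs_neg, abs_of_nonneg ht.1] at h

theorem dist_apply_right (ht : t ∈ Icc (0 : ℝ) 1) : dist (Γ x y t) y = (1 - t) * dist x y := by
  have h := hΓ.dist_apply_apply (x := x) (y := y) ht ⟨zero_le_one, le_rfl⟩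
  rwa [(hΓ x y).2.1, abs_sub_comm, abs_of_nonneg (sub_nonneg.2 ht.2)] at h

theorem lipschitzOnWith : LipschitzOnWith (nndist x y) (Γ x y) (Icc 0 1) :=
  LipschitzOnWith.of_dist_le_mul fun s hs t ht => by
    rw [hΓ.dist_apply_apply hs ht, coe_nndist, Real.dist_eq, mul_comm]

theorem gromovProd_le_dist (o : X) (ht : t ∈ Icc (0 : ℝ) 1) :
    gromovProd o x y ≤ dist o (Γ x y t) := by
  have hx := dist_triangle x (Γ x y t) o
  have hy := dist_triangle y (Γ x y t) o
  rw [hΓ.dist_left_apply ht] at hx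
  rw [dist_comm y (Γ x y t), hΓ.dist_apply_right ht] at hy
  rw [gromovProd, dist_comm o]
  linarith

end IsGeodesicBicombing

theorem IsConvexGeodesicBicombing.dist_apply_le {Γ : X → X → ℝ → X}
    (hΓ : IsConvexGeodesicBicombing Γ) (o z z' : X) {s : ℝ} (hs : s ∈ Icc (0 : ℝ) 1) :
    dist (Γ o z s) (Γ o z' s) ≤ s * dist z z' := by
  have hconv := (hΓ.2 o z o z').2 (⟨le_rfl, zero_le_one⟩ : (0 : ℝ) ∈ Icc 0 1)
    (⟨zero_le_one, le_rfl⟩ : (1 : ℝ) ∈ Icc 0 1) (sub_nonneg.2 hs.2) hs.1 (sub_add_cancel 1 s)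
  simpa [(hΓ.1 o z).1, (hΓ.1 o z').1, (hΓ.1 o z).2.1, (hΓ.1 o z').2.1] using hconv

noncomputable def radialProj (Γ : X → X → ℝ → X) (o : X) (R : ℝ) (z : X) : X :=
  Γ o z (R / dist o z)

section radialProj

variable {Γ : X → X → ℝ → X} {o z : X} {R : ℝ}

theorem div_dist_mem_Icc (hR : 0 < R) (hz : R ≤ dist o z) : R / dist o z ∈ Icc (0 : ℝ) 1 :=
  ⟨div_nonneg hR.le dist_nonneg, (div_le_one (hR.trans_le hz)).2 hz⟩

theorem radialProj_mem_sphere (hΓ : IsGeodesicBicombing Γ) (hR : 0 < R) (hz : R ≤ dist o z) :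
    radialProj Γ o R z ∈ sphere o R := by
  rw [mem_sphere', radialProj, hΓ.dist_left_apply (div_dist_mem_Icc hR hz),
    div_mul_cancel₀ _ (hR.trans_le hz).ne']

theorem radialProj_of_mem_sphere (hΓ : IsGeodesicBicombing Γ) (hR : R ≠ 0)
    (hz : z ∈ sphere o R) : radialProj Γ o R z = z := by
  rw [radialProj, mem_sphere'.1 hz, div_self hR, (hΓ o z).2.1]

theorem lipschitzOnWith_radialProj (hΓ : IsConvexGeodesicBicombing Γ) (hR : 0 < R) :
    LipschitzOnWith 2 (radialProj Γ o R) {z | R ≤ dist o z} := by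
  refine LipschitzOnWith.of_dist_le_mul fun z (hz : R ≤ dist o z) z' (hz' : R ≤ dist o z') => ?_
  set a := dist o z
  set b := dist o z'
  have ha : 0 < a := hR.trans_le hz
  have hb : 0 < b := hR.trans_le hz'
  have hba : |b - a| ≤ dist z z' := by
    simpa only [dist_comm] using abs_dist_sub_le z' z o
  have hshift : |R / a - R / b| * b ≤ |b - a| := by
    rw [show R / a - R / b = R / a * (b - a) / b by field_simp, abs_div, abs_mul,
      abs_of_pos hb, abs_of_nonneg (div_nonneg hR.le ha.le), div_mul_cancel₀ _ hb.ne']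
    exact mul_le_of_le_one_left (abs_nonneg _) ((div_le_one ha).2 hz)
  have hsa := div_dist_mem_Icc hR hz
  calc dist (radialProj Γ o R z) (radialProj Γ o R z')
      ≤ dist (Γ o z (R / a)) (Γ o z' (R / a)) + dist (Γ o z' (R / a)) (Γ o z' (R / b)) :=
        dist_triangle _ _ _
    _ ≤ R / a * dist z z' + |R / a - R / b| * b := by
        rw [hΓ.1.dist_apply_apply hsa (div_dist_mem_Icc hR hz')]
        exact add_le_add (hΓ.dist_apply_le o z z' hsa) le_rfl
    _ ≤ dist z z' + dist z z' :=
        add_le_add (mul_le_of_le_one_left dist_nonneg hsa.2) (hshift.trans hba)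
    _ = (2 : NNReal) * dist z z' := by push_cast; ring

theorem connectedComponentIn_sphere_eq_radialProj (hΓ : IsConvexGeodesicBicombing Γ)
    (hR : 0 < R) {γ : ℝ → X} {p : X} (hγ : IsGeodesicSegment γ o p) (hp : R ≤ dist o p) :
    connectedComponentIn (sphere o R) (γ R) =
      connectedComponentIn (sphere o R) (radialProj Γ o R p) := by
  have hout : MapsTo γ (Icc R (dist o p)) {z | R ≤ dist o z} := fun t ht =>
    ht.1.trans (hγ.dist_left ⟨hR.le.trans ht.1, ht.2⟩).ge
  have hγR : γ R ∈ sphere o R := mem_sphere'.2 (hγ.dist_left ⟨hR.le, hp⟩)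
  have hcont : ContinuousOn (radialProj Γ o R ∘ γ) (Icc R (dist o p)) :=
    (lipschitzOnWith_radialProj hΓ hR).continuousOn.comp
      (hγ.lipschitzOnWith.continuousOn.mono (Icc_subset_Icc_left hR.le)) hout
  have hsph : MapsTo (radialProj Γ o R ∘ γ) (Icc R (dist o p)) (sphere o R) :=
    fun t ht => radialProj_mem_sphere hΓ.1 hR (hout ht)
  have key := connectedComponentIn_eq_of_continuousOn_Icc hp hcont hsph
  rwa [Function.comp_apply, Function.comp_apply, hγ.2.1,
    radialProj_of_mem_sphere hΓ.1 hR.ne' hγR] at key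

theorem connectedComponentIn_sphere_radialProj_eq (hΓ : IsConvexGeodesicBicombing Γ)
    (hR : 0 < R) {p q : X} (hpq : R ≤ gromovProd o p q) :
    connectedComponentIn (sphere o R) (radialProj Γ o R p) =
      connectedComponentIn (sphere o R) (radialProj Γ o R q) := by
  have hout : MapsTo (Γ p q) (Icc 0 1) {z | R ≤ dist o z} := fun t ht =>
    hpq.trans (hΓ.1.gromovProd_le_dist o ht)
  have hcont : ContinuousOn (radialProj Γ o R ∘ Γ p q) (Icc 0 1) :=
    (lipschitzOnWith_radialProj hΓ hR).continuousOn.comp hΓ.1.lipschitzOnWith.continuousOn hout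
  have hsph : MapsTo (radialProj Γ o R ∘ Γ p q) (Icc 0 1) (sphere o R) :=
    fun t ht => radialProj_mem_sphere hΓ.1 hR (hout ht)
  have key := connectedComponentIn_eq_of_continuousOn_Icc zero_le_one hcont hsph
  rwa [Function.comp_apply, Function.comp_apply, (hΓ.1 p q).1, (hΓ.1 p q).2.1] at key

end radialProj

section coneAt

variable {o x : X} {R : ℝ}

theorem exists_isGeodesicSegment_of_mem_coneAt {W : Set X} (hW : W ⊆ sphere o R)
    (hx : x ∈ coneAt o W) : ∃ γ, IsGeodesicSegment γ o x ∧ R ≤ dist o x ∧ γ R ∈ W := by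
  obtain ⟨γ, hγ, t, ht, hγt⟩ := hx
  obtain rfl : t = R := (hγ.dist_left ht).symm.trans (mem_sphere'.1 (hW hγt))
  exact ⟨γ, hγ, ht.2, hγt⟩

theorem connectedComponentIn_sphere_eq_of_le_gromovProd {Γ : X → X → ℝ → X}
    (hΓ : IsConvexGeodesicBicombing Γ) (hR : 0 < R) {a b p q : X}
    (hp : p ∈ coneAt o (connectedComponentIn (sphere o R) a))
    (hq : q ∈ coneAt o (connectedComponentIn (sphere o R) b)) (hpq : R ≤ gromovProd o p q) :
    connectedComponentIn (sphere o R) a = connectedComponentIn (sphere o R) b := by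
  obtain ⟨γ, hγ, hRp, hγa⟩ :=
    exists_isGeodesicSegment_of_mem_coneAt (connectedComponentIn_subset _ _) hp
  obtain ⟨γ', hγ', hRq, hγ'b⟩ :=
    exists_isGeodesicSegment_of_mem_coneAt (connectedComponentIn_subset _ _) hq
  calc connectedComponentIn (sphere o R) a
      = connectedComponentIn (sphere o R) (γ R) := connectedComponentIn_eq hγa
    _ = connectedComponentIn (sphere o R) (radialProj Γ o R p) :=
        connectedComponentIn_sphere_eq_radialProj hΓ hR hγ hRp
    _ = connectedComponentIn (sphere o R) (radialProj Γ o R q) :=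
        connectedComponentIn_sphere_radialProj_eq hΓ hR hpq
    _ = connectedComponentIn (sphere o R) (γ' R) :=
        (connectedComponentIn_sphere_eq_radialProj hΓ hR hγ' hRq).symm
    _ = connectedComponentIn (sphere o R) b := (connectedComponentIn_eq hγ'b).symm

theorem coneAt_inter_coneAt_eq_empty {Γ : X → X → ℝ → X} (hΓ : IsConvexGeodesicBicombing Γ)
    (hR : 0 < R) {a b : X}
    (hab : connectedComponentIn (sphere o R) a ≠ connectedComponentIn (sphere o R) b) :
    coneAt o (connectedComponentIn (sphere o R) a) ∩
      coneAt o (connectedComponentIn (sphere o R) b) = ∅ := by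
  refine eq_empty_iff_forall_notMem.2 fun y ⟨hya, hyb⟩ => hab ?_
  obtain ⟨-, -, hRy, -⟩ :=
    exists_isGeodesicSegment_of_mem_coneAt (connectedComponentIn_subset _ _) hya
  refine connectedComponentIn_sphere_eq_of_le_gromovProd hΓ hR hya hyb ?_
  rwa [gromovProd_self, dist_comm]

theorem setOf_le_dist_eq_biUnion_coneAt (hgeo : IsGeodesicSpace X) (hR : 0 ≤ R) :
    {x | R ≤ dist o x} = ⋃ s ∈ sphere o R, coneAt o (connectedComponentIn (sphere o R) s) := by
  ext x
  simp only [mem_iUnion]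
  constructor
  · intro hx
    obtain ⟨γ, hγ⟩ := hgeo o x
    have hγR : γ R ∈ sphere o R := mem_sphere'.2 (hγ.dist_left ⟨hR, hx⟩)
    exact ⟨γ R, hγR, γ, hγ, R, ⟨hR, hx⟩, mem_connectedComponentIn hγR⟩
  · rintro ⟨s, -, hx⟩
    obtain ⟨-, -, hRx, -⟩ :=
      exists_isGeodesicSegment_of_mem_coneAt (connectedComponentIn_subset _ _) hx
    exact hRx

end coneAt

theorem cones_over_sphere_components_general
    {X : Type u} [MetricSpace X]
    (hgeo : IsGeodesicSpace X)
    (hbic : ∃ Γ : X → X → ℝ → X, IsConvexGeodesicBicombing Γ)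
    (o : X) (R : ℝ) (hR : 0 < R)
    (S : Set X) (hS : S = {x : X | dist o x = R})
    (p₀ q₀ : X)
    (U V : Set X) (hU : U = connectedComponentIn S p₀) (hV : V = connectedComponentIn S q₀)
    (hUV : U ≠ V) :
    (∀ p ∈ coneAt o U, ∀ q ∈ coneAt o V, gromovProd o p q ≤ R) ∧
    coneAt o U ∩ coneAt o V = ∅ ∧
    ({x : X | R ≤ dist o x} = ⋃ s ∈ S, coneAt o (connectedComponentIn S s)) ∧
    (∀ s ∈ S, ∀ t ∈ S, connectedComponentIn S s ≠ connectedComponentIn S t →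
      coneAt o (connectedComponentIn S s) ∩ coneAt o (connectedComponentIn S t) = ∅) := by
  obtain ⟨Γ, hΓ⟩ := hbic
  obtain rfl : S = sphere o R := hS.trans (ext fun _ => mem_sphere'.symm)
  subst hU hV
  refine ⟨fun p hp q hq => not_lt.1 fun hlt => hUV ?_, coneAt_inter_coneAt_eq_empty hΓ hR hUV,
    setOf_le_dist_eq_biUnion_coneAt hgeo hR.le,
    fun s _ t _ hst => coneAt_inter_coneAt_eq_empty hΓ hR hst⟩
  exact connectedComponentIn_sphere_eq_of_le_gromovProd hΓ hR hp hq hlt.le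

/-- Let `X` be a proper geodesic metric space admitting a convex geodesic
bicombing, `o ∈ X`, `R > 0`, and `S` the sphere of radius `R` about `o`. If `U` and `V` are
distinct connected components of `S`, then `(p|q)_o ≤ R` for all `p ∈ Cone_o(U)` and
`q ∈ Cone_o(V)`; in particular the two cones are disjoint. Moreover
`{x | d(o,x) ≥ R}` is the disjoint union of the cones over the connected components of `S`. -/
theorem cones_over_sphere_components
    {X : Type u} [MetricSpace X] [ProperSpace X]
    (hgeo : IsGeodesicSpace X)
    (hbic : ∃ Γ : X → X → ℝ → X, IsConvexGeodesicBicombing Γ)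
    (o : X) (R : ℝ) (hR : 0 < R)
    (S : Set X) (hS : S = {x : X | dist o x = R})
    (p₀ q₀ : X) (hp₀ : p₀ ∈ S) (hq₀ : q₀ ∈ S)
    (U V : Set X) (hU : U = connectedComponentIn S p₀) (hV : V = connectedComponentIn S q₀)
    (hUV : U ≠ V) :
    (∀ p ∈ coneAt o U, ∀ q ∈ coneAt o V, gromovProd o p q ≤ R) ∧
    coneAt o U ∩ coneAt o V = ∅ ∧
    ({x : X | R ≤ dist o x} = ⋃ s ∈ S, coneAt o (connectedComponentIn S s)) ∧
    (∀ s ∈ S, ∀ t ∈ S, connectedComponentIn S s ≠ connectedComponentIn S t →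
      coneAt o (connectedComponentIn S s) ∩ coneAt o (connectedComponentIn S t) = ∅) :=
  cones_over_sphere_components_general hgeo hbic o R hR S hS p₀ q₀ U V hU hV hUV
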